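/- Let 1 ≤ p < ∞ and let B_u, B_v be the weighted backward shifts on X = ℓ_p(ℤ₊) associated with weight sequences u and v which are bounded below, i.e. inf_{n≥1} |u_n| > 0 and inf_{n≥1} |v_n| > 0. If B_u and B_v are not similar, i.e. if either liminf_{n→∞} |u₁⋯u_n / (v₁⋯v_n)| = 0 or limsup_{n→∞} |u₁⋯u_n / (v₁⋯v_n)| = ∞, then B_u and B_v are orthogonal: for any Borel probability measures m_u, m_v on X with m_u B_u-invariant, m_v B_v-invariant and m_u({0}) = 0 = m_v({0}), the measures m_u and m_v are mutually singular. -/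

import Mathlib

/-!
Suppose `liminf ‖u₁⋯uₙ‖ / ‖v₁⋯vₙ‖ = 0`; the other case is the same with `u` and `v` exchanged.
Coordinatewise `‖(B_uⁿ x)_j‖ = ρ_{j,n} ‖(B_vⁿ x)_j‖` with `ρ_{j,n} = ∏_{j < i ≤ j+n} ‖u_i‖ / ‖v_i‖`,
and since the ratios `‖u_i‖ / ‖v_i‖` are bounded above and below, `ρ_{j,n} ≤ C_N ρ_{0,n}` for
`j ≤ N`. As `m_u({0}) = 0`, for large `N` most of the `m_u`-mass lies where one of the first `N + 1`
coordinates has norm at least `1 / (N + 1)`, and by invariance the same holds for the preimage of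
that set under `B_uⁿ`. Choosing `n` with `ρ_{0,n}` tiny, on this preimage some coordinate of
`B_vⁿ x` is huge, an event of small `m_v`-measure by invariance of `m_v`. Sets of almost full
`m_u`-measure and almost null `m_v`-measure give mutual singularity by Borel–Cantelli.
-/

open MeasureTheory Filter
open scoped ENNReal NNReal

noncomputable instance {𝕂 : Type*} [RCLike 𝕂] {p : ℝ≥0∞} [Fact (1 ≤ p)] :
    MeasurableSpace (lp (fun _ : ℕ => 𝕂) p) := borel _

instance {𝕂 : Type*} [RCLike 𝕂] {p : ℝ≥0∞} [Fact (1 ≤ p)] :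
    BorelSpace (lp (fun _ : ℕ => 𝕂) p) := ⟨rfl⟩

open Topology

theorem MeasureTheory.Measure.MutuallySingular.of_forall_exists_le {α : Type*}
    [MeasurableSpace α] {μ ν : Measure α}
    (h : ∀ ε : ℝ≥0∞, 0 < ε → ∃ s, μ sᶜ ≤ ε ∧ ν s ≤ ε) : μ ⟂ₘ ν := by
  choose s hs using fun k : ℕ => h (2⁻¹ ^ k) (ENNReal.pow_pos (by simp) k)
  have hgeom : ∑' k : ℕ, (2⁻¹ : ℝ≥0∞) ^ k ≠ ∞ := by simp
  refine .mk (s := limsup (fun k => (s k)ᶜ) atTop) (t := limsup s atTop)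
    (measure_limsup_atTop_eq_zero <|
      ne_top_of_le_ne_top hgeom (ENNReal.tsum_le_tsum fun k => (hs k).1))
    (measure_limsup_atTop_eq_zero <|
      ne_top_of_le_ne_top hgeom (ENNReal.tsum_le_tsum fun k => (hs k).2))
    fun x _ => ?_
  simp only [Set.mem_union, mem_limsup_iff_frequently_mem, Set.mem_compl_iff]
  by_contra! hx
  exact (hx.1.and hx.2).exists.elim fun _ h => h.2 h.1

theorem MeasureTheory.MeasurePreserving.of_measure_preimage_eq {α β : Type*}
    [MeasurableSpace α] [MeasurableSpace β] {μ : Measure α} {ν : Measure β} {f : α → β}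
    (hf : Measurable f) (h : ∀ s, MeasurableSet s → μ (f ⁻¹' s) = ν s) :
    MeasurePreserving f μ ν :=
  ⟨hf, Measure.ext fun s hs => by rw [Measure.map_apply hf hs, h s hs]⟩

theorem Finset.prod_Ioc_shift_le_pow_mul {a : ℕ → ℝ} {ℓ L : ℝ} (hℓ : 0 < ℓ)
    (ha : ∀ i, 1 ≤ i → ℓ ≤ a i ∧ a i ≤ L) (j n : ℕ) :
    ∏ i ∈ Ioc j (j + n), a i ≤ (L / ℓ) ^ j * ∏ i ∈ Ioc 0 n, a i := by
  have ha₀ {k m : ℕ} : ∀ i ∈ Ioc k m, 0 ≤ a i := fun i hi => hℓ.le.trans (ha i (by grind)).1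
  have hlow : ℓ ^ j ≤ ∏ i ∈ Ioc 0 j, a i := by
    simpa using prod_le_prod (fun _ _ => hℓ.le) fun i (hi : i ∈ Ioc 0 j) => (ha i (by grind)).1
  have hup : ∏ i ∈ Ioc n (n + j), a i ≤ L ^ j := by
    simpa using prod_le_prod ha₀ fun i (hi : i ∈ Ioc n (n + j)) => (ha i (by grind)).2
  rw [div_pow, div_mul_eq_mul_div, le_div_iff₀ (by positivity)]
  calc (∏ i ∈ Ioc j (j + n), a i) * ℓ ^ j
      ≤ (∏ i ∈ Ioc 0 j, a i) * ∏ i ∈ Ioc j (j + n), a i := by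
        rw [mul_comm]; exact mul_le_mul_of_nonneg_right hlow (prod_nonneg ha₀)
    _ = (∏ i ∈ Ioc 0 n, a i) * ∏ i ∈ Ioc n (n + j), a i := by
        rw [prod_Ioc_consecutive _ j.zero_le (j.le_add_right n),
          prod_Ioc_consecutive _ n.zero_le (n.le_add_right j), add_comm]
    _ ≤ L ^ j * ∏ i ∈ Ioc 0 n, a i := by
        rw [mul_comm]; exact mul_le_mul_of_nonneg_right hup (prod_nonneg ha₀)

theorem exists_bounds_norm_div_norm {𝕂 : Type*} [RCLike 𝕂] {u v : ℕ → 𝕂}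
    (hu : ∃ M : ℝ, ∀ n, ‖u n‖ ≤ M) (hv : ∃ M : ℝ, ∀ n, ‖v n‖ ≤ M)
    (hu' : ∃ c : ℝ, 0 < c ∧ ∀ n, 1 ≤ n → c ≤ ‖u n‖)
    (hv' : ∃ c : ℝ, 0 < c ∧ ∀ n, 1 ≤ n → c ≤ ‖v n‖) :
    ∃ ℓ L : ℝ, 0 < ℓ ∧ ∀ i, 1 ≤ i → ℓ ≤ ‖u i‖ / ‖v i‖ ∧ ‖u i‖ / ‖v i‖ ≤ L := by
  obtain ⟨Mu, hMu⟩ := hu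
  obtain ⟨Mv, hMv⟩ := hv
  obtain ⟨cu, hcu, hu'⟩ := hu'
  obtain ⟨cv, hcv, hv'⟩ := hv'
  have hMv₀ : 0 < Mv := hcv.trans_le ((hv' 1 le_rfl).trans (hMv 1))
  refine ⟨cu / Mv, Mu / cv, by positivity, fun i hi => ⟨?_, ?_⟩⟩
  · exact div_le_div₀ (norm_nonneg _) (hu' i hi) (hcv.trans_le (hv' i hi)) (hMv i)
  · exact div_le_div₀ (hcu.le.trans ((hu' 1 le_rfl).trans (hMu 1))) (hMu i) hcv (hv' i hi)

section WeightedShift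

variable {𝕂 : Type*} [RCLike 𝕂] {p : ℝ≥0∞}

local notation "ℓ^p" => lp (fun _ : ℕ => 𝕂) p

def IsWeightedBackwardShift (w : ℕ → 𝕂) (T : ℓ^p → ℓ^p) : Prop :=
  ∀ x n, (T x : ℕ → 𝕂) n = w (n + 1) * (x : ℕ → 𝕂) (n + 1)

theorem IsWeightedBackwardShift.iterate_apply {w : ℕ → 𝕂} {T : ℓ^p → ℓ^p}
    (hT : IsWeightedBackwardShift w T) (k : ℕ) (x : ℓ^p) (j : ℕ) :
    (T^[k] x : ℕ → 𝕂) j = (∏ i ∈ Finset.Ioc j (j + k), w i) * (x : ℕ → 𝕂) (j + k) := by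
  induction k generalizing x with
  | zero => simp
  | succ k ih =>
    rw [Function.iterate_succ_apply, ih, hT, ← add_assoc,
      Finset.prod_Ioc_succ_top (j.le_add_right k), mul_assoc]

theorem IsWeightedBackwardShift.norm_iterate_apply_eq_mul {u v : ℕ → 𝕂} {Tu Tv : ℓ^p → ℓ^p}
    (hu : IsWeightedBackwardShift u Tu) (hv : IsWeightedBackwardShift v Tv)
    (hv₀ : ∀ i, 1 ≤ i → v i ≠ 0) (n : ℕ) (x : ℓ^p) (j : ℕ) :
    ‖(Tu^[n] x : ℕ → 𝕂) j‖
      = (∏ i ∈ Finset.Ioc j (j + n), ‖u i‖ / ‖v i‖) * ‖(Tv^[n] x : ℕ → 𝕂) j‖ := by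
  have hprod : ∏ i ∈ Finset.Ioc j (j + n), ‖v i‖ ≠ 0 :=
    Finset.prod_ne_zero_iff.2 fun i hi => norm_ne_zero_iff.2 (hv₀ i (by grind))
  rw [hu.iterate_apply, hv.iterate_apply, norm_mul, norm_mul, norm_prod, norm_prod,
    Finset.prod_div_distrib, ← mul_assoc, div_mul_cancel₀ _ hprod]

def someCoordNormGe (N : ℕ) (r : ℝ) : Set (ℓ^p) := {y | ∃ j ≤ N, r ≤ ‖(y : ℕ → 𝕂) j‖}

theorem iterate_preimage_someCoordNormGe_subset {u v : ℕ → 𝕂} {Tu Tv : ℓ^p → ℓ^p}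
    (hu : IsWeightedBackwardShift u Tu) (hv : IsWeightedBackwardShift v Tv)
    (hv₀ : ∀ i, 1 ≤ i → v i ≠ 0) {N n : ℕ} {δ R : ℝ}
    (hsmall : ∀ j ≤ N, (∏ i ∈ Finset.Ioc j (j + n), ‖u i‖ / ‖v i‖) * R < δ) :
    Tu^[n] ⁻¹' someCoordNormGe N δ ⊆ Tv^[n] ⁻¹' someCoordNormGe N R := by
  rintro x ⟨j, hj, hδ⟩
  refine ⟨j, hj, ?_⟩
  rw [hu.norm_iterate_apply_eq_mul hv hv₀] at hδ
  have hP : 0 ≤ ∏ i ∈ Finset.Ioc j (j + n), ‖u i‖ / ‖v i‖ :=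
    Finset.prod_nonneg fun _ _ => by positivity
  by_contra! hlt
  nlinarith [hsmall j hj, mul_le_mul_of_nonneg_left hlt.le hP]

variable [Fact (1 ≤ p)]

theorem measurableSet_someCoordNormGe (N : ℕ) (r : ℝ) :
    MeasurableSet (someCoordNormGe (𝕂 := 𝕂) (p := p) N r) := by
  have hcont (j : ℕ) : Continuous fun y : ℓ^p => ‖(y : ℕ → 𝕂) j‖ :=
    (lp.lipschitzWith_one_eval p j).continuous.norm
  rw [show someCoordNormGe N r = ⋃ j, {y : ℓ^p | j ≤ N} ∩ {y | r ≤ ‖(y : ℕ → 𝕂) j‖} by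
    ext; simp [someCoordNormGe]]
  exact .iUnion fun j => (MeasurableSet.const (j ≤ N)).inter
    (measurableSet_le measurable_const (hcont j).measurable)

theorem tendsto_measure_someCoordNormGe_atTop (μ : Measure (ℓ^p)) [IsFiniteMeasure μ] (N : ℕ) :
    Tendsto (fun R => μ (someCoordNormGe N R)) atTop (𝓝 0) := by
  have hempty : ⋂ R : ℝ, someCoordNormGe (𝕂 := 𝕂) (p := p) N R = ∅ := by
    refine Set.eq_empty_of_forall_notMem fun y hy => ?_
    obtain ⟨j, -, hj⟩ := Set.mem_iInter.1 hy (‖y‖ + 1)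
    linarith [lp.norm_apply_le_norm (zero_lt_one.trans_le Fact.out).ne' y j]
  rw [← measure_empty (μ := μ), ← hempty]
  refine tendsto_measure_iInter_atTop
    (fun R => (measurableSet_someCoordNormGe N R).nullMeasurableSet) ?_ ⟨0, measure_ne_top _ _⟩
  rintro R R' hRR' y ⟨j, hj, h⟩
  exact ⟨j, hj, hRR'.trans h⟩

theorem tendsto_measure_compl_someCoordNormGe (μ : Measure (ℓ^p)) [IsFiniteMeasure μ] :
    Tendsto (fun N : ℕ => μ (someCoordNormGe N (1 / (N + 1)))ᶜ) atTop (𝓝 (μ {0})) := by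
  have hanti : Antitone fun N : ℕ => (someCoordNormGe (𝕂 := 𝕂) (p := p) N (1 / (N + 1)))ᶜ := by
    intro N N' hN y hy ⟨j, hj, h⟩
    refine hy ⟨j, hj.trans hN, le_trans ?_ h⟩
    gcongr
  have hinter : ⋂ N : ℕ, (someCoordNormGe (𝕂 := 𝕂) (p := p) N (1 / (N + 1)))ᶜ = {0} := by
    refine Set.Subset.antisymm (fun y hy => ?_) ?_
    · simp only [Set.mem_iInter, Set.mem_compl_iff, someCoordNormGe, Set.mem_ofPred_eq,
        not_exists, not_and, not_le] at hy
      refine Set.mem_singleton_iff.2 (lp.ext (funext fun j => norm_le_zero_iff.1 ?_))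
      exact ge_of_tendsto tendsto_one_div_add_atTop_nhds_zero_nat
        ((eventually_ge_atTop j).mono fun N hN => (hy N j hN).le)
    · rintro _ rfl
      simp [someCoordNormGe, Nat.cast_add_one_pos]
  rw [← hinter]
  exact tendsto_measure_iInter_atTop
    (fun N => (measurableSet_someCoordNormGe N _).compl.nullMeasurableSet) hanti
    ⟨0, measure_ne_top _ _⟩

theorem mutuallySingular_of_exists_norm_prod_div_lt {u v : ℕ → 𝕂} {Tu Tv : ℓ^p → ℓ^p}
    (hu : IsWeightedBackwardShift u Tu) (hv : IsWeightedBackwardShift v Tv)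
    (hv₀ : ∀ i, 1 ≤ i → v i ≠ 0) {ℓ L : ℝ} (hℓ : 0 < ℓ)
    (hratio : ∀ i, 1 ≤ i → ℓ ≤ ‖u i‖ / ‖v i‖ ∧ ‖u i‖ / ‖v i‖ ≤ L)
    (hsmall : ∀ ε : ℝ, 0 < ε → ∃ n,
      ‖∏ i ∈ Finset.Icc 1 n, u i‖ / ‖∏ i ∈ Finset.Icc 1 n, v i‖ < ε)
    {μ ν : Measure (ℓ^p)} [IsFiniteMeasure μ] [IsFiniteMeasure ν]
    (hμ : MeasurePreserving Tu μ μ) (hν : MeasurePreserving Tv ν ν) (hμ₀ : μ {0} = 0) :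
    μ ⟂ₘ ν := by
  refine .of_forall_exists_le fun ε hε => ?_
  obtain ⟨N, hN⟩ : ∃ N : ℕ, μ (someCoordNormGe N (1 / (N + 1)))ᶜ ≤ ε :=
    ((tendsto_measure_compl_someCoordNormGe μ).eventually (ge_mem_nhds (hμ₀ ▸ hε))).exists
  obtain ⟨R, hR, hR₀⟩ : ∃ R : ℝ, ν (someCoordNormGe N R) ≤ ε ∧ 0 < R :=
    (((tendsto_measure_someCoordNormGe_atTop ν N).eventually (ge_mem_nhds hε)).and
      (eventually_gt_atTop 0)).exists
  have hLℓ : 1 ≤ L / ℓ := (one_le_div hℓ).2 ((hratio 1 le_rfl).1.trans (hratio 1 le_rfl).2)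
  obtain ⟨n, hn⟩ := hsmall (1 / (N + 1) / ((L / ℓ) ^ N * R)) (by positivity)
  have hIcc : Finset.Icc 1 n = Finset.Ioc 0 n := Finset.Icc_add_one_left_eq_Ioc 0 n
  rw [norm_prod, norm_prod, ← Finset.prod_div_distrib, hIcc, lt_div_iff₀ (by positivity)] at hn
  have hsub : Tu^[n] ⁻¹' someCoordNormGe N (1 / (N + 1)) ⊆ Tv^[n] ⁻¹' someCoordNormGe N R := by
    refine iterate_preimage_someCoordNormGe_subset hu hv hv₀ fun j hj => ?_
    have hρ : 0 ≤ ∏ i ∈ Finset.Ioc 0 n, ‖u i‖ / ‖v i‖ :=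
      Finset.prod_nonneg fun _ _ => by positivity
    calc (∏ i ∈ Finset.Ioc j (j + n), ‖u i‖ / ‖v i‖) * R
        ≤ (L / ℓ) ^ j * (∏ i ∈ Finset.Ioc 0 n, ‖u i‖ / ‖v i‖) * R := by
          gcongr; exact Finset.prod_Ioc_shift_le_pow_mul hℓ hratio j n
      _ ≤ (L / ℓ) ^ N * (∏ i ∈ Finset.Ioc 0 n, ‖u i‖ / ‖v i‖) * R := by gcongr
      _ < 1 / (N + 1) := by linarith
  refine ⟨Tu^[n] ⁻¹' someCoordNormGe N (1 / (N + 1)), ?_, ?_⟩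
  · rw [← Set.preimage_compl, (hμ.iterate n).measure_preimage
      (measurableSet_someCoordNormGe _ _).compl.nullMeasurableSet]
    exact hN
  · calc ν (Tu^[n] ⁻¹' someCoordNormGe N (1 / (N + 1)))
        ≤ ν (Tv^[n] ⁻¹' someCoordNormGe N R) := measure_mono hsub
      _ = ν (someCoordNormGe N R) :=
        (hν.iterate n).measure_preimage (measurableSet_someCoordNormGe _ _).nullMeasurableSet
      _ ≤ ε := hR

end WeightedShift

theorem orthogonal_of_not_similar_of_bddBelow_general
    {𝕂 : Type*} [RCLike 𝕂] (p : ℝ≥0∞) [Fact (1 ≤ p)]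
    (u v : ℕ → 𝕂)
    (hubdd : ∃ M : ℝ, ∀ n, ‖u n‖ ≤ M) (hvbdd : ∃ M : ℝ, ∀ n, ‖v n‖ ≤ M)
    (hubelow : ∃ c : ℝ, 0 < c ∧ ∀ n, 1 ≤ n → c ≤ ‖u n‖)
    (hvbelow : ∃ c : ℝ, 0 < c ∧ ∀ n, 1 ≤ n → c ≤ ‖v n‖)
    (Bu Bv : lp (fun _ : ℕ => 𝕂) p →L[𝕂] lp (fun _ : ℕ => 𝕂) p)
    (hBu : ∀ (x : lp (fun _ : ℕ => 𝕂) p) (n : ℕ),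
        (Bu x : ∀ _ : ℕ, 𝕂) n = u (n + 1) * (x : ∀ _ : ℕ, 𝕂) (n + 1))
    (hBv : ∀ (x : lp (fun _ : ℕ => 𝕂) p) (n : ℕ),
        (Bv x : ∀ _ : ℕ, 𝕂) n = v (n + 1) * (x : ∀ _ : ℕ, 𝕂) (n + 1))
    (hnotsim :
      (∀ ε : ℝ, 0 < ε → ∃ᶠ n in atTop,
          ‖∏ i ∈ Finset.Icc 1 n, u i‖ / ‖∏ i ∈ Finset.Icc 1 n, v i‖ < ε) ∨
      (∀ M : ℝ, ∃ᶠ n in atTop,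
          M < ‖∏ i ∈ Finset.Icc 1 n, u i‖ / ‖∏ i ∈ Finset.Icc 1 n, v i‖))
    (mu mv : Measure (lp (fun _ : ℕ => 𝕂) p))
    [IsProbabilityMeasure mu] [IsProbabilityMeasure mv]
    (hmu : ∀ A : Set (lp (fun _ : ℕ => 𝕂) p), MeasurableSet A → mu (Bu ⁻¹' A) = mu A)
    (hmv : ∀ A : Set (lp (fun _ : ℕ => 𝕂) p), MeasurableSet A → mv (Bv ⁻¹' A) = mv A)
    (hzero_u : mu {0} = 0) (hzero_v : mv {0} = 0) :
    mu.MutuallySingular mv := by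
  have hu₀ : ∀ i, 1 ≤ i → u i ≠ 0 := fun i hi =>
    let ⟨_, hc, h⟩ := hubelow; norm_pos_iff.1 (hc.trans_le (h i hi))
  have hv₀ : ∀ i, 1 ≤ i → v i ≠ 0 := fun i hi =>
    let ⟨_, hc, h⟩ := hvbelow; norm_pos_iff.1 (hc.trans_le (h i hi))
  have hmu' := MeasurePreserving.of_measure_preimage_eq Bu.continuous.measurable hmu
  have hmv' := MeasurePreserving.of_measure_preimage_eq Bv.continuous.measurable hmv
  rcases hnotsim with hsmall | hlarge
  · obtain ⟨ℓ, L, hℓ, hratio⟩ := exists_bounds_norm_div_norm hubdd hvbdd hubelow hvbelow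
    exact mutuallySingular_of_exists_norm_prod_div_lt hBu hBv hv₀ hℓ hratio
      (fun ε hε => (hsmall ε hε).exists) hmu' hmv' hzero_u
  · obtain ⟨ℓ, L, hℓ, hratio⟩ := exists_bounds_norm_div_norm hvbdd hubdd hvbelow hubelow
    refine (mutuallySingular_of_exists_norm_prod_div_lt hBv hBu hu₀ hℓ hratio
      (fun ε hε => ?_) hmv' hmu' hzero_v).symm
    obtain ⟨n, hn⟩ := (hlarge ε⁻¹).exists
    exact ⟨n, by rw [← inv_div]; exact inv_lt_of_inv_lt₀ hε hn⟩

/-- If the weights `u`, `v` are bounded below and `B_u`, `B_v` are not similar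
(i.e. `liminf |u₁⋯u_n/(v₁⋯v_n)| = 0` or `limsup |u₁⋯u_n/(v₁⋯v_n)| = ∞`), then `B_u` and `B_v`
are orthogonal: invariant probability measures not charging `{0}` are mutually singular. -/
theorem orthogonal_of_not_similar_of_bddBelow
    {𝕂 : Type*} [RCLike 𝕂] (p : ℝ≥0∞) [Fact (1 ≤ p)] (hp : p ≠ ⊤)
    (u v : ℕ → 𝕂) (hu0 : ∀ n, 1 ≤ n → u n ≠ 0) (hv0 : ∀ n, 1 ≤ n → v n ≠ 0)
    (hubdd : ∃ M : ℝ, ∀ n, ‖u n‖ ≤ M) (hvbdd : ∃ M : ℝ, ∀ n, ‖v n‖ ≤ M)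
    (hubelow : ∃ c : ℝ, 0 < c ∧ ∀ n, 1 ≤ n → c ≤ ‖u n‖)
    (hvbelow : ∃ c : ℝ, 0 < c ∧ ∀ n, 1 ≤ n → c ≤ ‖v n‖)
    (Bu Bv : lp (fun _ : ℕ => 𝕂) p →L[𝕂] lp (fun _ : ℕ => 𝕂) p)
    (hBu : ∀ (x : lp (fun _ : ℕ => 𝕂) p) (n : ℕ),
        (Bu x : ∀ _ : ℕ, 𝕂) n = u (n + 1) * (x : ∀ _ : ℕ, 𝕂) (n + 1))
    (hBv : ∀ (x : lp (fun _ : ℕ => 𝕂) p) (n : ℕ),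
        (Bv x : ∀ _ : ℕ, 𝕂) n = v (n + 1) * (x : ∀ _ : ℕ, 𝕂) (n + 1))
    (hnotsim :
      (∀ ε : ℝ, 0 < ε → ∃ᶠ n in atTop,
          ‖∏ i ∈ Finset.Icc 1 n, u i‖ / ‖∏ i ∈ Finset.Icc 1 n, v i‖ < ε) ∨
      (∀ M : ℝ, ∃ᶠ n in atTop,
          M < ‖∏ i ∈ Finset.Icc 1 n, u i‖ / ‖∏ i ∈ Finset.Icc 1 n, v i‖))
    (mu mv : Measure (lp (fun _ : ℕ => 𝕂) p))
    [IsProbabilityMeasure mu] [IsProbabilityMeasure mv]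
    (hmu : ∀ A : Set (lp (fun _ : ℕ => 𝕂) p), MeasurableSet A → mu (Bu ⁻¹' A) = mu A)
    (hmv : ∀ A : Set (lp (fun _ : ℕ => 𝕂) p), MeasurableSet A → mv (Bv ⁻¹' A) = mv A)
    (hzero_u : mu {0} = 0) (hzero_v : mv {0} = 0) :
    mu.MutuallySingular mv :=
  orthogonal_of_not_similar_of_bddBelow_general p u v hubdd hvbdd hubelow hvbelow Bu Bv hBu hBv
    hnotsim mu mv hmu hmv hzero_u hzero_v
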